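/- For m ≥ 0, |q| < 1, and |a| ≤ 1: ∑_{n=1}^∞ C(n,m) a q^n / (1 − a q^n) = ∑_{n=1}^∞ C(n,m) (1 − a q^{2n}) a^n q^{n^2} / ((1 − q^n)(1 − a q^n)) + ∑_{k=1}^{m} ∑_{n=1}^∞ C(n, m−k) a^n q^{n(n+k)} / (1 − q^n)^{k+1}. -/

import Mathlib

/-!
Expanding `a qⁿ / (1 - a qⁿ) = ∑_{j ≥ 1} (a qⁿ)ʲ` turns the left-hand side into the absolutely
convergent double series `∑_{n, j ≥ 1} C(n, m) aʲ q^{nj}`, which we split along the diagonal.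
For `j ≥ n` the sum over `j` is `C(n, m) aⁿ q^{n²} / (1 - a qⁿ)`. For `n > j` write `n = j + i`:
by Vandermonde, `C(j + i, m) = ∑ₖ C(j, m - k) C(i, k)`, and
`∑_{i ≥ 0} C(i, k) xⁱ = xᵏ / (1 - x)^{k+1}` with `x = qʲ`. Dropping `i = 0` leaves
`C(j, m) x / (1 - x)` from `k = 0`, which joins the diagonal part to give the first series on the
right; the terms `k ≥ 1` give the others.
-/

open Finset

section Geometric

variable {𝕜 : Type*} [NormedField 𝕜] {x : 𝕜}

theorem one_sub_ne_zero_of_norm_lt_one (hx : ‖x‖ < 1) : 1 - x ≠ 0 := by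
  rintro h
  simp [← sub_eq_zero.1 h] at hx

theorem hasSum_pow_add (hx : ‖x‖ < 1) (d : ℕ) :
    HasSum (fun j : ℕ ↦ x ^ (j + d)) (x ^ d / (1 - x)) := by
  simpa [pow_add, mul_comm, div_eq_mul_inv] using
    (hasSum_geometric_of_norm_lt_one hx).mul_left (x ^ d)

theorem hasSum_choose_mul_pow (hx : ‖x‖ < 1) (k : ℕ) :
    HasSum (fun i : ℕ ↦ (i.choose k : 𝕜) * x ^ i) (x ^ k / (1 - x) ^ (k + 1)) := by
  have vanish : ∑ i ∈ range k, (i.choose k : 𝕜) * x ^ i = 0 :=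
    sum_eq_zero fun i hi ↦ by simp [Nat.choose_eq_zero_of_lt (mem_range.1 hi)]
  rw [← hasSum_nat_add_iff' k, vanish, sub_zero, ← mul_one_div]
  exact ((hasSum_choose_mul_geometric_of_norm_lt_one k hx).mul_left (x ^ k)).congr_fun
    fun i ↦ by rw [pow_add]; ring

theorem hasSum_add_choose_mul_pow (hx : ‖x‖ < 1) (N m : ℕ) :
    HasSum (fun i : ℕ ↦ ((N + i).choose m : 𝕜) * x ^ i)
      (∑ k ∈ range (m + 1), (N.choose (m - k) : 𝕜) * (x ^ k / (1 - x) ^ (k + 1))) := by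
  refine (hasSum_sum fun k _ ↦ (hasSum_choose_mul_pow hx k).mul_left (N.choose (m - k) : 𝕜)
    ).congr_fun fun i ↦ ?_
  rw [add_comm, Nat.add_choose_eq, Nat.sum_antidiagonal_eq_sum_range_succ
    (fun k l ↦ i.choose k * N.choose l), Nat.cast_sum, sum_mul]
  refine sum_congr rfl fun k _ ↦ ?_
  push_cast
  ring

end Geometric

def diagonalSplitEquiv : (ℕ × ℕ) ⊕ (ℕ × ℕ) ≃ ℕ × ℕ where
  toFun := Sum.elim (fun p ↦ (p.1, p.1 + p.2)) (fun p ↦ (p.1 + 1 + p.2, p.1))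
  invFun p := if p.1 ≤ p.2 then .inl (p.1, p.2 - p.1) else .inr (p.2, p.1 - p.2 - 1)
  left_inv := by
    rintro (⟨n, i⟩ | ⟨n, i⟩)
    · simp
    · simp only [Sum.elim_inr, show ¬ n + 1 + i ≤ n by omega, if_false]
      congr 2; omega
  right_inv := by
    rintro ⟨n, j⟩
    by_cases h : n ≤ j
    · simp [h]
    · simp only [h, if_false, Sum.elim_inr]; congr 1; omega

theorem HasSum.diagonalSplit_fiberwise {E : Type*} [NormedAddCommGroup E] [CompleteSpace E]
    {f : ℕ × ℕ → E} {s : E} {u l : ℕ → E} (hf : HasSum f s)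
    (hu : ∀ n, HasSum (fun i ↦ f (n, n + i)) (u n))
    (hl : ∀ n, HasSum (fun i ↦ f (n + 1 + i, n)) (l n)) :
    HasSum (fun n ↦ u n + l n) s := by
  have hsplit := diagonalSplitEquiv.hasSum_iff.2 hf
  have hU := (hsplit.summable.comp_injective Sum.inl_injective).hasSum
  have hL := (hsplit.summable.comp_injective Sum.inr_injective).hasSum
  rw [← (hU.sum hL).unique hsplit]
  exact (hU.prod_fiberwise hu).add (hL.prod_fiberwise hl)

section Lambert

variable {𝕜 : Type*} [NormedField 𝕜] {a q : 𝕜}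

/-- The terms `C(n, m) (a qⁿ)ʲ`, `n, j ≥ 1`, with both indices shifted to start at `0`. -/
def lambertDoubleTerm (m : ℕ) (a q : 𝕜) (p : ℕ × ℕ) : 𝕜 :=
  ((p.1 + 1).choose m : 𝕜) * (a * q ^ (p.1 + 1)) ^ (p.2 + 1)

theorem norm_pow_succ_lt_one (hq : ‖q‖ < 1) (n : ℕ) : ‖q ^ (n + 1)‖ < 1 := by
  rw [norm_pow]; exact pow_lt_one₀ (norm_nonneg q) hq n.succ_ne_zero

theorem norm_mul_pow_succ_lt_one (hq : ‖q‖ ≤ 1) (haq : ‖a * q‖ < 1) (n : ℕ) :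
    ‖a * q ^ (n + 1)‖ < 1 :=
  calc ‖a * q ^ (n + 1)‖ = ‖q‖ ^ n * ‖a * q‖ := by rw [pow_succ, mul_left_comm, norm_mul, norm_pow]
    _ ≤ 1 * ‖a * q‖ := by gcongr; exact pow_le_one₀ (norm_nonneg q) hq
    _ < 1 := by rwa [one_mul]

theorem summable_choose_mul_norm_pow_succ {x : 𝕜} (hx : ‖x‖ < 1) (k : ℕ) :
    Summable fun n : ℕ ↦ ((n + 1).choose k : ℝ) * ‖x‖ ^ (n + 1) :=
  (summable_nat_add_iff 1).2 (hasSum_choose_mul_pow (x := ‖x‖) (by simpa) k).summable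

theorem norm_natCast_le_self (n : ℕ) : ‖(n : 𝕜)‖ ≤ n := by
  simpa using Nat.norm_cast_le (α := 𝕜) n

variable (m : ℕ)

theorem hasSum_lambertDoubleTerm_row (hq : ‖q‖ ≤ 1) (haq : ‖a * q‖ < 1) (n : ℕ) :
    HasSum (fun j ↦ lambertDoubleTerm m a q (n, j))
      (((n + 1).choose m : 𝕜) * a * q ^ (n + 1) / (1 - a * q ^ (n + 1))) := by
  have h := (hasSum_pow_add (norm_mul_pow_succ_lt_one hq haq n) 1).mul_left
    ((n + 1).choose m : 𝕜)
  rwa [pow_one, ← mul_div_assoc, ← mul_assoc] at h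

theorem hasSum_lambertDoubleTerm_upper (hq : ‖q‖ ≤ 1) (haq : ‖a * q‖ < 1) (n : ℕ) :
    HasSum (fun i ↦ lambertDoubleTerm m a q (n, n + i))
      (((n + 1).choose m : 𝕜) * (a * q ^ (n + 1)) ^ (n + 1) / (1 - a * q ^ (n + 1))) := by
  rw [mul_div_assoc]
  exact ((hasSum_pow_add (norm_mul_pow_succ_lt_one hq haq n) (n + 1)).mul_left _).congr_fun
    fun i ↦ by dsimp only [lambertDoubleTerm]; ring

theorem hasSum_lambertDoubleTerm_lower (hq : ‖q‖ < 1) (n : ℕ) :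
    HasSum (fun i ↦ lambertDoubleTerm m a q (n + 1 + i, n))
      ((a * q ^ (n + 1)) ^ (n + 1) * (∑ k ∈ range (m + 1), ((n + 1).choose (m - k) : 𝕜) *
        ((q ^ (n + 1)) ^ k / (1 - q ^ (n + 1)) ^ (k + 1)) - (n + 1).choose m)) := by
  have h := (hasSum_nat_add_iff' 1).2
    (hasSum_add_choose_mul_pow (norm_pow_succ_lt_one hq n) (n + 1) m)
  simp only [sum_range_one, add_zero, pow_zero, mul_one] at h
  refine (h.mul_left _).congr_fun fun i ↦ ?_
  rw [lambertDoubleTerm, show n + 1 + i + 1 = n + 1 + (i + 1) by ring]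
  ring

theorem summable_choose_mul_pow_div_one_sub_pow [CompleteSpace 𝕜] (hq : ‖q‖ < 1)
    (haq : ‖a * q‖ < 1) (j k : ℕ) :
    Summable fun n : ℕ ↦ ((n + 1).choose j : 𝕜) * a ^ (n + 1) * q ^ ((n + 1) * (n + 1 + k)) /
      (1 - q ^ (n + 1)) ^ (k + 1) := by
  refine .of_norm_bounded ((summable_choose_mul_norm_pow_succ haq j).div_const
    ((1 - ‖q‖) ^ (k + 1))) fun n ↦ ?_
  have hden : 1 - ‖q‖ ≤ ‖1 - q ^ (n + 1)‖ := by
    have : ‖q ^ (n + 1)‖ ≤ ‖q‖ := by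
      rw [norm_pow]; exact pow_le_of_le_one (norm_nonneg q) hq.le n.succ_ne_zero
    linarith [norm_sub_norm_le (1 : 𝕜) (q ^ (n + 1)), norm_one (α := 𝕜)]
  have hexp : ‖q‖ ^ ((n + 1) * (n + 1 + k)) ≤ ‖q‖ ^ (n + 1) :=
    pow_le_pow_of_le_one (norm_nonneg q) hq.le (Nat.le_mul_of_pos_right _ (by omega))
  rw [norm_div, norm_mul, norm_mul, norm_pow, norm_pow, norm_pow, norm_mul, mul_pow, ← mul_assoc]
  gcongr
  exact norm_natCast_le_self _

theorem summable_lambertDoubleTerm [CompleteSpace 𝕜] (hq : ‖q‖ < 1) (haq : ‖a * q‖ < 1) :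
    Summable (lambertDoubleTerm m a q) := by
  refine .of_norm_bounded (g := fun p ↦ ‖a‖ * (((p.1 + 1).choose m : ℝ) * ‖q‖ ^ (p.1 + 1) *
    ‖a * q‖ ^ p.2)) ?_ fun ⟨n, j⟩ ↦ ?_
  · exact ((summable_choose_mul_norm_pow_succ hq m).mul_of_nonneg
      (summable_geometric_of_lt_one (norm_nonneg _) haq) (fun _ ↦ by positivity)
      fun _ ↦ by positivity).mul_left _
  calc ‖lambertDoubleTerm m a q (n, j)‖
      = ‖((n + 1).choose m : 𝕜)‖ * (‖a‖ * ‖q‖ ^ (n + 1)) * (‖a * q‖ ^ j * (‖q‖ ^ n) ^ j) := by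
        simp only [lambertDoubleTerm, norm_mul, norm_pow]; ring
    _ ≤ (n + 1).choose m * (‖a‖ * ‖q‖ ^ (n + 1)) * (‖a * q‖ ^ j * 1) := by
        gcongr
        · exact norm_natCast_le_self _
        · exact pow_le_one₀ (by positivity) (pow_le_one₀ (norm_nonneg q) hq.le)
    _ = _ := by ring

theorem lambert_upper_add_lower_eq (N : ℕ) (hx : 1 - q ^ N ≠ 0) (hax : 1 - a * q ^ N ≠ 0) :
    (N.choose m : 𝕜) * (a * q ^ N) ^ N / (1 - a * q ^ N) + (a * q ^ N) ^ N *
      (∑ k ∈ range (m + 1), (N.choose (m - k) : 𝕜) * ((q ^ N) ^ k / (1 - q ^ N) ^ (k + 1)) -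
        N.choose m)
    = (N.choose m : 𝕜) * (1 - a * q ^ (2 * N)) * a ^ N * q ^ (N ^ 2) /
        ((1 - q ^ N) * (1 - a * q ^ N)) +
      ∑ k ∈ Icc 1 m,
        (N.choose (m - k) : 𝕜) * a ^ N * q ^ (N * (N + k)) / (1 - q ^ N) ^ (k + 1) := by
  rw [range_eq_Ico, sum_eq_sum_Ico_succ_bot (by omega : 0 < m + 1), zero_add,
    Ico_add_one_right_eq_Icc, Nat.sub_zero, mul_sub, mul_add, mul_sum]
  have hsum : ∑ k ∈ Icc 1 m, (a * q ^ N) ^ N * ((N.choose (m - k) : 𝕜) *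
      ((q ^ N) ^ k / (1 - q ^ N) ^ (k + 1))) =
      ∑ k ∈ Icc 1 m, (N.choose (m - k) : 𝕜) * a ^ N * q ^ (N * (N + k)) / (1 - q ^ N) ^ (k + 1) :=
    sum_congr rfl fun k _ ↦ by ring
  rw [hsum, add_sub_right_comm, ← add_assoc, add_left_inj]
  field_simp
  ring

end Lambert

theorem stmt18_general (m : ℕ) (q a : ℂ) (hq : ‖q‖ < 1) (ha : ‖a‖ ≤ 1) :
    ∑' n : ℕ, ((n + 1).choose m : ℂ) * a * q ^ (n + 1) / (1 - a * q ^ (n + 1))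
      = (∑' n : ℕ, ((n + 1).choose m : ℂ) * (1 - a * q ^ (2 * (n + 1))) * a ^ (n + 1) *
            q ^ ((n + 1) ^ 2) / ((1 - q ^ (n + 1)) * (1 - a * q ^ (n + 1))))
        + ∑ k ∈ Finset.Icc 1 m,
            ∑' n : ℕ, ((n + 1).choose (m - k) : ℂ) * a ^ (n + 1) *
              q ^ ((n + 1) * (n + 1 + k)) / (1 - q ^ (n + 1)) ^ (k + 1) := by
  have haq : ‖a * q‖ < 1 := by
    rw [norm_mul]; exact (mul_le_of_le_one_left (norm_nonneg q) ha).trans_lt hq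
  have hF := (summable_lambertDoubleTerm m hq haq).hasSum
  have hsplit := hF.diagonalSplit_fiberwise (hasSum_lambertDoubleTerm_upper m hq.le haq)
    (hasSum_lambertDoubleTerm_lower m hq)
  have hT := hasSum_sum fun k (_ : k ∈ Icc 1 m) ↦
    (summable_choose_mul_pow_div_one_sub_pow hq haq (m - k) k).hasSum
  rw [(hF.prod_fiberwise (hasSum_lambertDoubleTerm_row m hq.le haq)).tsum_eq,
    ← sub_eq_iff_eq_add]
  refine (((hsplit.sub hT).congr_fun fun n ↦ ?_).tsum_eq).symm
  rw [lambert_upper_add_lower_eq m (n + 1)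
    (one_sub_ne_zero_of_norm_lt_one (norm_pow_succ_lt_one hq n))
    (one_sub_ne_zero_of_norm_lt_one (norm_mul_pow_succ_lt_one hq.le haq n)), add_sub_cancel_right]

theorem stmt18 (m : ℕ) (q a : ℂ) (hq : ‖q‖ < 1) (ha : ‖a‖ ≤ 1)
    (ha1 : ∀ n : ℕ, 1 ≤ n → a * q ^ n ≠ 1) :
    ∑' n : ℕ, ((n + 1).choose m : ℂ) * a * q ^ (n + 1) / (1 - a * q ^ (n + 1))
      = (∑' n : ℕ, ((n + 1).choose m : ℂ) * (1 - a * q ^ (2 * (n + 1))) * a ^ (n + 1) *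
            q ^ ((n + 1) ^ 2) / ((1 - q ^ (n + 1)) * (1 - a * q ^ (n + 1))))
        + ∑ k ∈ Finset.Icc 1 m,
            ∑' n : ℕ, ((n + 1).choose (m - k) : ℂ) * a ^ (n + 1) *
              q ^ ((n + 1) * (n + 1 + k)) / (1 - q ^ (n + 1)) ^ (k + 1) :=
  stmt18_general m q a hq ha
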